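/- Let α < 0 and a ∈ ℝ with αa² = −8. Then the triple (a, a, a) has all sectional curvatures equal, K₁₂ = K₁₃ = K₂₃ = −2/α, all principal Ricci curvatures equal, r₁ = r₂ = r₃ = −4/α, and moreover the corresponding round metric is a genuine fixed point of the RG-2 flow in the sense that −2r_i − (α/2)·S_i = 0 for each i, where S₁ = 2(K₁₂² + K₁₃²), S₂ = 2(K₁₂² + K₂₃²), S₃ = 2(K₁₃² + K₂₃²) are the eigenvalues of the Rm² tensor. -/

import Mathlib

/-!
On the round triple every principal Ricci curvature is `a²/2` and every sectional curvature
is `a²/4`, so each RG-2 component equals `-(a²/8)(αa² + 8)`, which vanishes when `αa² = -8`.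
-/

noncomputable section

/-- Principal Ricci curvature `r₁ = ½(a₁² − (a₂−a₃)²)`. -/
def r1 (a1 a2 a3 : ℝ) : ℝ := (a1 ^ 2 - (a2 - a3) ^ 2) / 2

/-- Principal Ricci curvature `r₂ = ½(a₂² − (a₁−a₃)²)`. -/
def r2 (a1 a2 a3 : ℝ) : ℝ := (a2 ^ 2 - (a1 - a3) ^ 2) / 2

/-- Principal Ricci curvature `r₃ = ½(a₃² − (a₁−a₂)²)`. -/
def r3 (a1 a2 a3 : ℝ) : ℝ := (a3 ^ 2 - (a1 - a2) ^ 2) / 2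

/-- Sectional curvature `K₁₂ = (r₁+r₂−r₃)/2`. -/
def K12 (a1 a2 a3 : ℝ) : ℝ := (r1 a1 a2 a3 + r2 a1 a2 a3 - r3 a1 a2 a3) / 2

/-- Sectional curvature `K₁₃ = (r₁+r₃−r₂)/2`. -/
def K13 (a1 a2 a3 : ℝ) : ℝ := (r1 a1 a2 a3 + r3 a1 a2 a3 - r2 a1 a2 a3) / 2

/-- Sectional curvature `K₂₃ = (r₂+r₃−r₁)/2`. -/
def K23 (a1 a2 a3 : ℝ) : ℝ := (r2 a1 a2 a3 + r3 a1 a2 a3 - r1 a1 a2 a3) / 2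

section RoundTriple

variable (a : ℝ)

@[simp] lemma r1_self : r1 a a a = a ^ 2 / 2 := by unfold r1; ring

@[simp] lemma r2_self : r2 a a a = a ^ 2 / 2 := by unfold r2; ring

@[simp] lemma r3_self : r3 a a a = a ^ 2 / 2 := by unfold r3; ring

@[simp] lemma K12_self : K12 a a a = a ^ 2 / 4 := by
  unfold K12; simp only [r1_self, r2_self, r3_self]; ring

@[simp] lemma K13_self : K13 a a a = a ^ 2 / 4 := by
  unfold K13; simp only [r1_self, r2_self, r3_self]; ring

@[simp] lemma K23_self : K23 a a a = a ^ 2 / 4 := by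
  unfold K23; simp only [r1_self, r2_self, r3_self]; ring

end RoundTriple

lemma round_rg2_component_eq_zero {α a : ℝ} (ha : α * a ^ 2 = -8) :
    -2 * (a ^ 2 / 2) - (α / 2) * (2 * ((a ^ 2 / 4) ^ 2 + (a ^ 2 / 4) ^ 2)) = 0 := by
  linear_combination (-(a ^ 2) / 8) * ha

theorem stmt8_general (α a : ℝ) (ha : α * a ^ 2 = -8) :
    K12 a a a = -(2 / α) ∧ K13 a a a = -(2 / α) ∧ K23 a a a = -(2 / α) ∧
    r1 a a a = -(4 / α) ∧ r2 a a a = -(4 / α) ∧ r3 a a a = -(4 / α) ∧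
    -2 * r1 a a a - (α / 2) * (2 * (K12 a a a ^ 2 + K13 a a a ^ 2)) = 0 ∧
    -2 * r2 a a a - (α / 2) * (2 * (K12 a a a ^ 2 + K23 a a a ^ 2)) = 0 ∧
    -2 * r3 a a a - (α / 2) * (2 * (K13 a a a ^ 2 + K23 a a a ^ 2)) = 0 := by
  have hα : α ≠ 0 := left_ne_zero_of_mul (by rw [ha]; norm_num)
  have ha2 : a ^ 2 = -8 / α := eq_div_of_mul_eq hα (by rw [mul_comm, ha])
  have hK : a ^ 2 / 4 = -(2 / α) := by rw [ha2]; ring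
  have hr : a ^ 2 / 2 = -(4 / α) := by rw [ha2]; ring
  have hfix := round_rg2_component_eq_zero ha
  simp only [r1_self, r2_self, r3_self, K12_self, K13_self, K23_self]
  exact ⟨hK, hK, hK, hr, hr, hr, hfix, hfix, hfix⟩

/-- for `α < 0` and `αa² = −8`, the round triple `(a,a,a)` has all sectional
curvatures `−2/α`, all Ricci curvatures `−4/α`, and is a genuine fixed point of RG-2 flow:
`−2rᵢ − (α/2)·Sᵢ = 0` where `S₁ = 2(K₁₂²+K₁₃²)`, `S₂ = 2(K₁₂²+K₂₃²)`, `S₃ = 2(K₁₃²+K₂₃²)`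
are the eigenvalues of the `Rm²` tensor. -/
theorem stmt8 (α a : ℝ) (hα : α < 0) (ha : α * a ^ 2 = -8) :
    K12 a a a = -(2 / α) ∧ K13 a a a = -(2 / α) ∧ K23 a a a = -(2 / α) ∧
    r1 a a a = -(4 / α) ∧ r2 a a a = -(4 / α) ∧ r3 a a a = -(4 / α) ∧
    -2 * r1 a a a - (α / 2) * (2 * (K12 a a a ^ 2 + K13 a a a ^ 2)) = 0 ∧
    -2 * r2 a a a - (α / 2) * (2 * (K12 a a a ^ 2 + K23 a a a ^ 2)) = 0 ∧
    -2 * r3 a a a - (α / 2) * (2 * (K13 a a a ^ 2 + K23 a a a ^ 2)) = 0 :=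
  stmt8_general α a ha
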